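/- Let K, a be real numbers with 0 ≤ a ≤ K, and let p = (p₋₃,…,p₃) be nonnegative reals indexed by {−3,…,3} summing to K with ∑_{x≠0} p_x = a. Then f₃(p) = ∑_{x≠y} w(x,y) p_x p_y ≤ 2Ka − (3/4)a², where w(x,y) = 1 if 1 ≤ |x−y| ≤ 3 and w(x,y) = 2 if 4 ≤ |x−y| ≤ 6. Equality holds when p = (a/4, a/4, 0, K−a, 0, a/4, a/4). -/
import Mathlib


/-- Weight function of the distance matrix `D₃` for magnitude `s = 3`. -/
noncomputable def w3 (x y : ℤ) : ℝ :=
  if 1 ≤ |x - y| ∧ |x - y| ≤ 3 then 1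
  else if 4 ≤ |x - y| ∧ |x - y| ≤ 6 then 2
  else 0

/-- `f₃(p) = p D₃ pᵀ` with coordinates indexed by `{-3,…,3}`. -/
noncomputable def f3 (p : ℤ → ℝ) : ℝ :=
  ∑ x ∈ Finset.Icc (-3 : ℤ) 3, ∑ y ∈ Finset.Icc (-3 : ℤ) 3, w3 x y * p x * p y

set_option maxHeartbeats 1000000 in
theorem stmt7 (K a : ℝ) (p : ℤ → ℝ) (ha0 : 0 ≤ a) (haK : a ≤ K)
    (hpos : ∀ x ∈ Finset.Icc (-3 : ℤ) 3, 0 ≤ p x)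
    (hsum : ∑ x ∈ Finset.Icc (-3 : ℤ) 3, p x = K)
    (hwt : ∑ x ∈ (Finset.Icc (-3 : ℤ) 3).erase 0, p x = a) :
    f3 p ≤ 2 * K * a - (3 / 4) * a ^ 2 ∧
    f3 (fun x => if x = 0 then K - a else if |x| = 1 then 0 else a / 4) =
      2 * K * a - (3 / 4) * a ^ 2 := by
  have hIcc : Finset.Icc (-3 : ℤ) 3 = {-3, -2, -1, 0, 1, 2, 3} := by decide
  have hIcc' : (Finset.Icc (-3 : ℤ) 3).erase 0 = {-3, -2, -1, 1, 2, 3} := by decide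
  constructor
  · simp only [f3, hIcc] at *
    simp only [hIcc'] at hwt
    norm_num [Finset.sum_insert, Finset.mem_insert, Finset.mem_singleton, w3] at *
    nlinarith [sq_nonneg (p (-3) + (1/5) * p (-2) + (1/5) * p (-1) - (3/5) * p 1 - (3/5) * p 2 - (3/5) * p 3),
      sq_nonneg (p (-2) + (1/6) * p (-1) + (1/3) * p 1 - (1/2) * p 2 - (1/2) * p 3),
      sq_nonneg (p (-1) + (2/7) * p 1 + (3/7) * p 2 - (3/7) * p 3),
      sq_nonneg (p 1 - (1/4) * p 2 + (1/4) * p 3),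
      sq_nonneg (p 2 - p 3)]
  · set q : ℤ → ℝ := fun x => if x = 0 then K - a else if |x| = 1 then 0 else a / 4 with hq
    have e1 : q (-3) = a / 4 := by norm_num [hq]
    have e2 : q (-2) = a / 4 := by norm_num [hq]
    have e3 : q (-1) = 0 := by norm_num [hq]
    have e4 : q 0 = K - a := by norm_num [hq]
    have e5 : q 1 = 0 := by norm_num [hq]
    have e6 : q 2 = a / 4 := by norm_num [hq]
    have e7 : q 3 = a / 4 := by norm_num [hq]
    simp only [f3, hIcc]
    norm_num [Finset.sum_insert, Finset.mem_insert, Finset.mem_singleton, w3,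
      e1, e2, e3, e4, e5, e6, e7]
    ring
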